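/- Let q₁, q₂, q₃, q₄ ∈ su(2) with inner product ⟨𝔞,𝔟⟩ = −(1/2)trace(𝔞𝔟), write a = (q₁,q₂,q₃) and ϕ = q₄, and set |q|² = Σ_{c=1}^{4} ⟨q_c, q_c⟩. Then |q|⁴ − Σ_{a,b=1}^{4} ⟨q_a, q_b⟩² = (1/4)·(|[a;a]|² + 2·Σ_c |[ϕ, a_c]|²), where [a;a]_c = (1/√2)ε^{cab}[a_a, a_b]. -/
import Mathlib


/-- The real vector space of 2×2 traceless anti-Hermitian complex matrices (= su(2)). -/
def IsSu2 (a : Matrix (Fin 2) (Fin 2) ℂ) : Prop :=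
  Matrix.trace a = 0 ∧ a.conjTranspose = -a

/-- The inner product `⟨𝔞,𝔟⟩ = −(1/2)·trace(𝔞𝔟)` on su(2) (real-valued on su(2)). -/
noncomputable def su2Inner (a b : Matrix (Fin 2) (Fin 2) ℂ) : ℝ :=
  (-(1/2 : ℂ) * Matrix.trace (a * b)).re

/-- The matrix commutator. -/
noncomputable def brkt (a b : Matrix (Fin 2) (Fin 2) ℂ) : Matrix (Fin 2) (Fin 2) ℂ :=
  a * b - b * a

/-- The completely antisymmetric tensor on three indices with `ε^{012} = 1`. -/
def eps3 (i j k : Fin 3) : ℝ :=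
  if (i, j, k) = (0, 1, 2) ∨ (i, j, k) = (1, 2, 0) ∨ (i, j, k) = (2, 0, 1) then 1
  else if (i, j, k) = (0, 2, 1) ∨ (i, j, k) = (2, 1, 0) ∨ (i, j, k) = (1, 0, 2) then -1
  else 0

/-- The quadratic bracket `[a;a]_c = (1/√2)·ε^{cab}[a_a, a_b]` (summed over `a, b`). -/
noncomputable def brkt2 (a : Fin 3 → Matrix (Fin 2) (Fin 2) ℂ) (c : Fin 3) :
    Matrix (Fin 2) (Fin 2) ℂ :=
  (Real.sqrt 2)⁻¹ • ∑ i, ∑ j, eps3 c i j • brkt (a i) (a j)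

lemma su2Inner_eq (m n : Matrix (Fin 2) (Fin 2) ℂ) :
    su2Inner m n
      = -(1/2) * (m 0 0 * n 0 0 + m 0 1 * n 1 0 + m 1 0 * n 0 1 + m 1 1 * n 1 1).re := by
  rw [su2Inner, Matrix.trace_fin_two]
  simp only [Matrix.mul_apply, Fin.sum_univ_two]
  rw [show (-(1/2:ℂ)) = ((-(1/2):ℝ):ℂ) by norm_num, Complex.re_ofReal_mul]
  simp only [Complex.add_re]
  ring

lemma su2Inner_smul (r : ℝ) (m n : Matrix (Fin 2) (Fin 2) ℂ) :
    su2Inner (r • m) (r • n) = r^2 * su2Inner m n := by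
  unfold su2Inner
  rw [smul_mul_smul_comm, Matrix.trace_smul, mul_smul_comm, Complex.real_smul,
    Complex.re_ofReal_mul]
  ring

lemma brkt2_inner (A : Fin 3 → Matrix (Fin 2) (Fin 2) ℂ) (c : Fin 3) :
    su2Inner (brkt2 A c) (brkt2 A c)
      = (1/2) * su2Inner (∑ i, ∑ j, eps3 c i j • brkt (A i) (A j))
          (∑ i, ∑ j, eps3 c i j • brkt (A i) (A j)) := by
  rw [brkt2, su2Inner_smul, inv_pow, Real.sq_sqrt (by norm_num : (2:ℝ) ≥ 0)]
  norm_num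

lemma su2_rep (m : Matrix (Fin 2) (Fin 2) ℂ) (h : IsSu2 m) :
    m = !![(m 0 0).im * Complex.I, (m 0 1).re + (m 0 1).im * Complex.I;
           -(m 0 1).re + (m 0 1).im * Complex.I, -((m 0 0).im * Complex.I)] := by
  obtain ⟨ht, hh⟩ := h
  rw [Matrix.trace_fin_two] at ht
  have h00 := congrFun (congrFun hh 0) 0
  have h10 := congrFun (congrFun hh 1) 0
  simp only [Matrix.conjTranspose_apply, Matrix.neg_apply] at h00 h10
  have e00 : m 0 0 = (m 0 0).im * Complex.I := by
    have := congrArg Complex.re h00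
    simp only [Complex.star_def, Complex.conj_re, Complex.neg_re] at this
    apply Complex.ext <;> simp <;> linarith
  have e01 : m 0 1 = (m 0 1).re + (m 0 1).im * Complex.I := by
    rw [Complex.re_add_im]
  have e10 : m 1 0 = -(m 0 1).re + (m 0 1).im * Complex.I := by
    have : m 1 0 = -star (m 0 1) := by rw [h10]; ring
    rw [this]
    apply Complex.ext <;> simp
  have e11 : m 1 1 = -((m 0 0).im * Complex.I) := by
    rw [← e00]; linear_combination ht
  ext i j
  fin_cases i <;> fin_cases j
  · simpa using e00
  · simpa using e01
  · simpa using e10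
  · simpa using e11

lemma eps3_000 : eps3 0 0 0 = 0 := by unfold eps3; rw [if_neg (by decide), if_neg (by decide)]
lemma eps3_001 : eps3 0 0 1 = 0 := by unfold eps3; rw [if_neg (by decide), if_neg (by decide)]
lemma eps3_002 : eps3 0 0 2 = 0 := by unfold eps3; rw [if_neg (by decide), if_neg (by decide)]
lemma eps3_010 : eps3 0 1 0 = 0 := by unfold eps3; rw [if_neg (by decide), if_neg (by decide)]
lemma eps3_011 : eps3 0 1 1 = 0 := by unfold eps3; rw [if_neg (by decide), if_neg (by decide)]
lemma eps3_012 : eps3 0 1 2 = 1 := by unfold eps3; rw [if_pos (by decide)]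
lemma eps3_020 : eps3 0 2 0 = 0 := by unfold eps3; rw [if_neg (by decide), if_neg (by decide)]
lemma eps3_021 : eps3 0 2 1 = -1 := by unfold eps3; rw [if_neg (by decide), if_pos (by decide)]
lemma eps3_022 : eps3 0 2 2 = 0 := by unfold eps3; rw [if_neg (by decide), if_neg (by decide)]
lemma eps3_100 : eps3 1 0 0 = 0 := by unfold eps3; rw [if_neg (by decide), if_neg (by decide)]
lemma eps3_101 : eps3 1 0 1 = 0 := by unfold eps3; rw [if_neg (by decide), if_neg (by decide)]
lemma eps3_102 : eps3 1 0 2 = -1 := by unfold eps3; rw [if_neg (by decide), if_pos (by decide)]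
lemma eps3_110 : eps3 1 1 0 = 0 := by unfold eps3; rw [if_neg (by decide), if_neg (by decide)]
lemma eps3_111 : eps3 1 1 1 = 0 := by unfold eps3; rw [if_neg (by decide), if_neg (by decide)]
lemma eps3_112 : eps3 1 1 2 = 0 := by unfold eps3; rw [if_neg (by decide), if_neg (by decide)]
lemma eps3_120 : eps3 1 2 0 = 1 := by unfold eps3; rw [if_pos (by decide)]
lemma eps3_121 : eps3 1 2 1 = 0 := by unfold eps3; rw [if_neg (by decide), if_neg (by decide)]
lemma eps3_122 : eps3 1 2 2 = 0 := by unfold eps3; rw [if_neg (by decide), if_neg (by decide)]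
lemma eps3_200 : eps3 2 0 0 = 0 := by unfold eps3; rw [if_neg (by decide), if_neg (by decide)]
lemma eps3_201 : eps3 2 0 1 = 1 := by unfold eps3; rw [if_pos (by decide)]
lemma eps3_202 : eps3 2 0 2 = 0 := by unfold eps3; rw [if_neg (by decide), if_neg (by decide)]
lemma eps3_210 : eps3 2 1 0 = -1 := by unfold eps3; rw [if_neg (by decide), if_pos (by decide)]
lemma eps3_211 : eps3 2 1 1 = 0 := by unfold eps3; rw [if_neg (by decide), if_neg (by decide)]
lemma eps3_212 : eps3 2 1 2 = 0 := by unfold eps3; rw [if_neg (by decide), if_neg (by decide)]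
lemma eps3_220 : eps3 2 2 0 = 0 := by unfold eps3; rw [if_neg (by decide), if_neg (by decide)]
lemma eps3_221 : eps3 2 2 1 = 0 := by unfold eps3; rw [if_neg (by decide), if_neg (by decide)]
lemma eps3_222 : eps3 2 2 2 = 0 := by unfold eps3; rw [if_neg (by decide), if_neg (by decide)]

set_option maxHeartbeats 2000000 in
/-- Identity (7.13): with `q = (a₁,a₂,a₃,ϕ)`,
`|q|⁴ − Σ_{a,b} ⟨q_a,q_b⟩² = (1/4)(|[a;a]|² + 2Σ_c|[ϕ,a_c]|²)`. -/
theorem extended_lagrange_identity (q : Fin 4 → Matrix (Fin 2) (Fin 2) ℂ)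
    (hq : ∀ c, IsSu2 (q c)) :
    (∑ c, su2Inner (q c) (q c)) ^ 2 - ∑ c, ∑ d, (su2Inner (q c) (q d)) ^ 2
      = (1/4) * ((∑ c, su2Inner (brkt2 (fun i => q i.castSucc) c)
                        (brkt2 (fun i => q i.castSucc) c))
          + 2 * ∑ c : Fin 3, su2Inner (brkt (q 3) (q c.castSucc))
                  (brkt (q 3) (q c.castSucc))) := by
  have rep0 := su2_rep (q 0) (hq 0)
  have rep1 := su2_rep (q 1) (hq 1)
  have rep2 := su2_rep (q 2) (hq 2)
  have rep3 := su2_rep (q 3) (hq 3)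
  simp only [brkt2_inner]
  simp only [su2Inner_eq, Fin.sum_univ_four, Fin.sum_univ_three,
    show (0:Fin 3).castSucc = (0:Fin 4) from rfl, show (1:Fin 3).castSucc = (1:Fin 4) from rfl,
    show (2:Fin 3).castSucc = (2:Fin 4) from rfl,
    eps3_000, eps3_001, eps3_002, eps3_010, eps3_011, eps3_012, eps3_020, eps3_021, eps3_022, eps3_100, eps3_101, eps3_102, eps3_110, eps3_111, eps3_112, eps3_120, eps3_121, eps3_122, eps3_200, eps3_201, eps3_202, eps3_210, eps3_211, eps3_212, eps3_220, eps3_221, eps3_222, zero_smul, one_smul, neg_smul, add_zero, zero_add]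
  rw [rep0, rep1, rep2, rep3]
  simp only [brkt, Matrix.sub_apply, Matrix.add_apply, Matrix.neg_apply, Matrix.mul_apply,
    Fin.sum_univ_two, Matrix.cons_val_zero, Matrix.cons_val_one, Matrix.head_cons,
    Matrix.head_fin_const, Matrix.of_apply, Matrix.cons_val', Matrix.empty_val',
    Matrix.cons_val_fin_one]
  simp only [Complex.add_re, Complex.add_im, Complex.mul_re, Complex.mul_im, Complex.sub_re,
    Complex.sub_im, Complex.neg_re, Complex.neg_im, Complex.I_re, Complex.I_im,
    Complex.ofReal_re, Complex.ofReal_im]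
  ring
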